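/- Let T be a pure row contraction on an infinite-dimensional Hilbert space H with all defect dimensions Δ_T^n finite. Then the defect dimensions are strictly increasing: Δ_T^m ≠ Δ_T^n whenever m ≠ n. -/

import Mathlib

open ContinuousLinearMap

/-- The completely positive map `Ψ_T(X) = ∑ i, T i X (T i)*` associated to a `d`-tuple. -/
noncomputable def psiMap {H : Type*} [NormedAddCommGroup H] [InnerProductSpace ℂ H]
    [CompleteSpace H] {d : ℕ} (T : Fin d → H →L[ℂ] H) (X : H →L[ℂ] H) : H →L[ℂ] H :=
  ∑ i, T i ∘L X ∘L adjoint (T i)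

/-- The `n`-th defect space: the closure of the range of `I - Ψ_T^n(I)`. -/
noncomputable def defectSpace {H : Type*} [NormedAddCommGroup H] [InnerProductSpace ℂ H]
    [CompleteSpace H] {d : ℕ} (T : Fin d → H →L[ℂ] H) (n : ℕ) : Submodule ℂ H :=
  (LinearMap.range ((1 - (psiMap T)^[n] 1 : H →L[ℂ] H) : H →ₗ[ℂ] H)).topologicalClosure

/-!
Write `D n = 1 - Ψ^[n] 1`. Then `D (n + 1) = D 1 + Ψ (D n)`, so every `D n` is positive, and
since a positive operator `A` kills `x` exactly when `re ⟪A x, x⟫ = 0`, the kernels satisfy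
`ker D (n + 1) = ker D 1 ⊓ ⨅ i, (T i)†⁻¹ (ker D n)`, a recursion in `n` alone. Hence the
kernels decrease, and once two consecutive ones agree the sequence is constant; the common value
then lies in every `ker D n`, and purity makes it `0`. The defect space is `(ker D n)ᗮ`, so two
consecutive defect spaces can only agree when the earlier one is all of `H`, which is excluded when
`H` is infinite-dimensional and the defect spaces are finite-dimensional. So the defect spaces, and
with them their dimensions, strictly increase.
-/

open Filter Topology
open scoped InnerProductSpace

namespace ContinuousLinearMap

variable {H : Type*} [NormedAddCommGroup H] [InnerProductSpace ℂ H] [CompleteSpace H]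

lemma IsPositive.apply_eq_zero_iff {A : H →L[ℂ] H} (hA : A.IsPositive) {x : H} :
    A x = 0 ↔ RCLike.re ⟪A x, x⟫_ℂ = 0 := by
  refine ⟨fun h ↦ by simp [h], fun h ↦ ?_⟩
  obtain ⟨S, rfl⟩ := CStarAlgebra.nonneg_iff_eq_star_mul_self.mp
    ((nonneg_iff_isPositive A).mpr hA)
  rw [star_eq_adjoint, mul_apply_eq_comp, adjoint_inner_left,
    inner_self_eq_norm_sq, sq_eq_zero_iff, norm_eq_zero] at h
  rw [mul_apply_eq_comp, h, map_zero]

lemma IsPositive.ker_add {A B : H →L[ℂ] H} (hA : A.IsPositive) (hB : B.IsPositive) :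
    (A + B).ker = A.ker ⊓ B.ker := by
  ext x
  simp only [Submodule.mem_inf, LinearMap.mem_ker, coe_coe]
  rw [(hA.add hB).apply_eq_zero_iff, hA.apply_eq_zero_iff, hB.apply_eq_zero_iff, add_apply,
    inner_add_left, map_add]
  exact add_eq_zero_iff_of_nonneg (hA.re_inner_nonneg_left x) (hB.re_inner_nonneg_left x)

lemma ker_sum_of_isPositive {ι : Type*} {s : Finset ι} {A : ι → H →L[ℂ] H}
    (hA : ∀ i ∈ s, (A i).IsPositive) :
    (∑ i ∈ s, A i).ker = ⨅ i ∈ s, (A i).ker := by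
  ext x
  simp only [Submodule.mem_iInf, LinearMap.mem_ker, coe_coe]
  rw [(isPositive_sum s hA).apply_eq_zero_iff, sum_apply, sum_inner, map_sum,
    Finset.sum_eq_zero_iff_of_nonneg fun i hi ↦ (hA i hi).re_inner_nonneg_left x]
  exact forall₂_congr fun i hi ↦ (hA i hi).apply_eq_zero_iff.symm

lemma IsPositive.ker_conj_adjoint {B : H →L[ℂ] H} (hB : B.IsPositive) (S : H →L[ℂ] H) :
    (S ∘L B ∘L adjoint S).ker = B.ker.comap (adjoint S : H →ₗ[ℂ] H) := by
  ext x
  rw [LinearMap.mem_ker, coe_coe, (hB.conj_adjoint S).apply_eq_zero_iff, Submodule.mem_comap,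
    LinearMap.mem_ker, coe_coe, coe_coe, hB.apply_eq_zero_iff, comp_apply, comp_apply,
    ← adjoint_inner_right]

end ContinuousLinearMap

section DefectOperator

variable {H : Type*} [NormedAddCommGroup H] [InnerProductSpace ℂ H] [CompleteSpace H]
  {d : ℕ} (T : Fin d → H →L[ℂ] H)

lemma psiMap_sub (X Y : H →L[ℂ] H) : psiMap T (X - Y) = psiMap T X - psiMap T Y := by
  simp only [psiMap, comp_sub, sub_comp, Finset.sum_sub_distrib]

lemma ContinuousLinearMap.IsPositive.psiMap {B : H →L[ℂ] H} (hB : B.IsPositive) :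
    (psiMap T B).IsPositive :=
  isPositive_sum _ fun i _ ↦ hB.conj_adjoint (T i)

lemma ker_psiMap {B : H →L[ℂ] H} (hB : B.IsPositive) :
    (psiMap T B).ker = ⨅ i, B.ker.comap (adjoint (T i) : H →ₗ[ℂ] H) := by
  rw [psiMap, ker_sum_of_isPositive fun i _ ↦ hB.conj_adjoint (T i)]
  simp only [Finset.mem_univ, iInf_pos, hB.ker_conj_adjoint]

noncomputable def defectOp (n : ℕ) : H →L[ℂ] H := 1 - (psiMap T)^[n] 1

@[simp] lemma defectOp_zero : defectOp T 0 = 0 := sub_self 1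

lemma defectOp_succ (n : ℕ) : defectOp T (n + 1) = defectOp T 1 + psiMap T (defectOp T n) := by
  simp only [defectOp, Function.iterate_succ_apply', Function.iterate_zero_apply, psiMap_sub]
  abel

variable {T}

lemma iInf_ker_defectOp_eq_bot
    (hpure : ∀ x : H, Tendsto (fun n ↦ ((psiMap T)^[n] 1) x) atTop (𝓝 0)) :
    ⨅ n, (defectOp T n).ker = ⊥ := by
  refine (Submodule.eq_bot_iff _).mpr fun x hx ↦
    (tendsto_const_nhds_iff (l := (atTop : Filter ℕ))).mp ?_
  have hfix : ∀ n, ((psiMap T)^[n] 1) x = x := fun n ↦ by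
    have := (Submodule.mem_iInf _).mp hx n
    rwa [LinearMap.mem_ker, coe_coe, defectOp, sub_apply, one_apply_eq_self, sub_eq_zero,
      eq_comm] at this
  simpa only [hfix] using hpure x

variable (hT : (defectOp T 1).IsPositive)
include hT

lemma isPositive_defectOp (n : ℕ) : (defectOp T n).IsPositive := by
  induction n with
  | zero => simp
  | succ n ih => rw [defectOp_succ]; exact hT.add (ih.psiMap T)

lemma ker_defectOp_succ (n : ℕ) :
    (defectOp T (n + 1)).ker =
      (defectOp T 1).ker ⊓ ⨅ i, (defectOp T n).ker.comap (adjoint (T i) : H →ₗ[ℂ] H) := by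
  rw [defectOp_succ, hT.ker_add ((isPositive_defectOp hT n).psiMap T),
    ker_psiMap T (isPositive_defectOp hT n)]

lemma antitone_ker_defectOp : Antitone fun n ↦ (defectOp T n).ker := by
  refine antitone_nat_of_succ_le fun n ↦ ?_
  induction n with
  | zero => simp
  | succ n ih =>
    rw [ker_defectOp_succ hT (n + 1)]
    nth_rw 2 [ker_defectOp_succ hT n]
    gcongr

lemma ker_defectOp_add_eq_of_succ {m : ℕ} (h : (defectOp T (m + 1)).ker = (defectOp T m).ker)
    (k : ℕ) : (defectOp T (m + k)).ker = (defectOp T m).ker := by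
  induction k with
  | zero => rfl
  | succ k ih => rw [← add_assoc, ker_defectOp_succ hT, ih, ← ker_defectOp_succ hT, h]

lemma ker_defectOp_eq_bot_of_succ
    (hpure : ∀ x : H, Tendsto (fun n ↦ ((psiMap T)^[n] 1) x) atTop (𝓝 0)) {m : ℕ}
    (h : (defectOp T (m + 1)).ker = (defectOp T m).ker) : (defectOp T m).ker = ⊥ := by
  refine eq_bot_iff.mpr ((le_iInf fun k ↦ ?_).trans (iInf_ker_defectOp_eq_bot hpure).le)
  rw [← ker_defectOp_add_eq_of_succ hT h k]
  exact antitone_ker_defectOp hT (Nat.le_add_left k m)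

lemma defectSpace_eq_orthogonal_ker (n : ℕ) : defectSpace T n = (defectOp T n).kerᗮ := by
  rw [orthogonal_ker, (isPositive_defectOp hT n).isSelfAdjoint.adjoint_eq]
  rfl

lemma ker_defectOp_eq_orthogonal (n : ℕ) : (defectOp T n).ker = (defectSpace T n)ᗮ := by
  rw [defectSpace_eq_orthogonal_ker hT, Submodule.orthogonal_orthogonal]

lemma monotone_defectSpace : Monotone (defectSpace T) := fun m n hmn ↦ by
  rw [defectSpace_eq_orthogonal_ker hT, defectSpace_eq_orthogonal_ker hT]
  exact Submodule.orthogonal_le (antitone_ker_defectOp hT hmn)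

lemma defectSpace_eq_top_of_succ
    (hpure : ∀ x : H, Tendsto (fun n ↦ ((psiMap T)^[n] 1) x) atTop (𝓝 0)) {m : ℕ}
    (h : defectSpace T (m + 1) = defectSpace T m) : defectSpace T m = ⊤ := by
  have hker : (defectOp T (m + 1)).ker = (defectOp T m).ker := by
    rw [ker_defectOp_eq_orthogonal hT, ker_defectOp_eq_orthogonal hT, h]
  rw [defectSpace_eq_orthogonal_ker hT, ker_defectOp_eq_bot_of_succ hT hpure hker,
    Submodule.bot_orthogonal_eq_top]

lemma strictMono_finrank_defectSpace
    (hpure : ∀ x : H, Tendsto (fun n ↦ ((psiMap T)^[n] 1) x) atTop (𝓝 0))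
    (hinf : ¬ FiniteDimensional ℂ H) (hfin : ∀ n, FiniteDimensional ℂ (defectSpace T n)) :
    StrictMono fun n ↦ Module.finrank ℂ (defectSpace T n) := by
  refine strictMono_nat_of_lt_succ fun m ↦ Submodule.finrank_lt_finrank_of_lt
    ((monotone_defectSpace hT m.le_succ).lt_of_ne fun h ↦ hinf ?_)
  have : FiniteDimensional ℂ (⊤ : Submodule ℂ H) :=
    defectSpace_eq_top_of_succ hT hpure h.symm ▸ hfin m
  exact Module.Finite.equiv Submodule.topEquiv

end DefectOperator

/-- For a pure row contraction on an infinite-dimensional Hilbert space whose defect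
dimensions are all finite, the defect dimensions are pairwise distinct. -/
theorem stmt11 {H : Type*} [NormedAddCommGroup H] [InnerProductSpace ℂ H] [CompleteSpace H]
    {d : ℕ} (T : Fin d → H →L[ℂ] H)
    (hT : (1 - psiMap T 1).IsPositive)
    (hpure : ∀ x : H,
      Filter.Tendsto (fun n => ((psiMap T)^[n] 1) x) Filter.atTop (nhds 0))
    (hinf : ¬ FiniteDimensional ℂ H)
    (hfin : ∀ n : ℕ, FiniteDimensional ℂ (defectSpace T n)) :
    ∀ m n : ℕ, m ≠ n →
      Module.finrank ℂ (defectSpace T m) ≠ Module.finrank ℂ (defectSpace T n) :=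
  fun _ _ ↦ (strictMono_finrank_defectSpace hT hpure hinf hfin).injective.ne
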